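/- Let N ∈ ℕ, N ≥ 2, with 2-adic expansion N = Σ_{l=0}^{L} a_l·2^l, where a_l ∈ {0,1} and a_L = 1 (i.e. L = ⌊log₂ N⌋), and set N₀ = 2·(N − 2^L). Let x*₁ ≤ x*₂ ≤ … ≤ x*_N be the first N terms of the sequence x_n := {log(2n−1)/log 2} arranged in increasing order, and define the gaps g_i := x*_{i+1} − x*_i for 1 ≤ i ≤ N−1 and g_N := x*₁ + 1 − x*_N. Then g_i = (log(2^{L+1} + i) − log(2^{L+1} + i − 1))/log(2) for 1 ≤ i ≤ N₀, and g_i = (log(N − N₀ + i) − log(N − N₀ + i − 1))/log(2) for N₀ + 1 ≤ i ≤ N. -/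

import Mathlib

/-!
Write `N = 2^L + M` with `M < 2^L`. Each `x_n` is `logb 2` of the dyadic number in `[1, 2)` with
odd numerator `2n - 1`, so every point has the form `logb 2 (m / 2^(L+1))` with
`2^(L+1) ≤ m < 2^(L+2)`. The `N` numerators `2^(L+1), 2^(L+1) + 1, …, 2^(L+1) + 2M` followed by
the even numbers up to `2^(L+2) - 2` all arise this way from some `n ≤ N` (an even numerator
reduces to a smaller odd one), and they give `N` distinct points; as the `x_n` with `n ≤ N` take
at most `N` values, these are exactly the sorted points. The gaps are then differences of
consecutive `logb 2 m`, and the numerator `2^(L+2)` after the last one closes the circle.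
-/

/-- The sequence `x_n = {log(2n-1)/log 2}`. -/
noncomputable def xseq (n : ℕ) : ℝ := Int.fract (Real.log (2 * (n : ℝ) - 1) / Real.log 2)

open Real Set

theorem Finset.eqOn_of_monotoneOn_of_strictMonoOn_of_image_eq {α β : Type*} [LinearOrder α]
    [LinearOrder β] {s : Finset α} {f g : α → β} (hf : MonotoneOn f s) (hg : StrictMonoOn g s)
    (h : s.image f = s.image g) : EqOn f g s := by
  have hcard : (s.image g).card = s.card := card_image_of_injOn hg.injOn
  have hf' : StrictMonoOn f s :=
    hf.strictMonoOn_of_injOn (card_image_iff.mp (h ▸ hcard))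
  have sorted {φ : α → β} (hφ : StrictMonoOn φ s) (hφg : s.image φ = s.image g) :
      φ ∘ s.orderEmbOfFin rfl = (s.image g).orderEmbOfFin hcard :=
    orderEmbOfFin_unique hcard (fun j => hφg ▸ mem_image_of_mem φ (orderEmbOfFin_mem s rfl j))
      fun _ _ hjk => hφ (orderEmbOfFin_mem s rfl _) (orderEmbOfFin_mem s rfl _)
        ((s.orderEmbOfFin rfl).strictMono hjk)
  intro x hx
  obtain ⟨j, rfl⟩ : x ∈ Set.range (s.orderEmbOfFin rfl) := by rwa [range_orderEmbOfFin]
  exact (congrFun (sorted hf' h) j).trans (congrFun (sorted hg rfl) j).symm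

theorem Real.fract_logb_of_pow_le_of_lt_pow {b x : ℝ} {k : ℕ} (hb : 1 < b) (hk : b ^ k ≤ x)
    (hk' : x < b ^ (k + 1)) : Int.fract (logb b x) = logb b x - k := by
  have logb_pow_self (j : ℕ) : logb b (b ^ j) = j := by
    rw [logb_pow, logb_self_eq_one hb, mul_one]
  have hbk : 0 < b ^ k := pow_pos (by linarith) k
  have lower := logb_le_logb_of_le hb hbk hk
  have upper := logb_lt_logb hb (hbk.trans_le hk) hk'
  rw [logb_pow_self] at lower upper
  push_cast at upper
  exact Int.fract_eq_iff.2 ⟨by linarith, by linarith, k, by push_cast; ring⟩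

theorem Real.fract_logb_pow_mul {b x : ℝ} (hb : 1 < b) (hx : x ≠ 0) (v : ℕ) :
    Int.fract (logb b (b ^ v * x)) = Int.fract (logb b x) := by
  rw [logb_mul (pow_ne_zero v (by linarith)) hx, logb_pow, logb_self_eq_one hb, mul_one,
    Int.fract_natCast_add]

theorem exists_xseq_eq_fract_logb {m : ℕ} (hm : m ≠ 0) :
    ∃ n, 1 ≤ n ∧ 2 * n ≤ m + 1 ∧ xseq n = Int.fract (logb 2 m) := by
  obtain ⟨v, c, ⟨d, rfl⟩, rfl⟩ := Nat.exists_eq_two_pow_mul_odd hm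
  refine ⟨d + 1, by omega, ?_, ?_⟩
  · have := Nat.le_mul_of_pos_left (2 * d + 1) (pow_pos two_pos v)
    omega
  · rw [Nat.cast_mul, Nat.cast_pow, Nat.cast_two, fract_logb_pow_mul one_lt_two (by positivity),
      xseq, show 2 * ((d + 1 : ℕ) : ℝ) - 1 = ((2 * d + 1 : ℕ) : ℝ) by push_cast; ring]
    rfl

-- With `N = 2 ^ L + M`, the sorted points are `x*_i = sortedPoint L M i` for `1 ≤ i ≤ N`.
def sortedNumerator (L M i : ℕ) : ℕ :=
  if i ≤ 2 * M + 1 then 2 ^ (L + 1) + i - 1 else 2 * (2 ^ L + i - M - 1)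

noncomputable def sortedPoint (L M i : ℕ) : ℝ := logb 2 (sortedNumerator L M i) - (L + 1)

section
variable {L M i : ℕ}

theorem sortedNumerator_of_le (h : i ≤ 2 * M + 1) :
    (sortedNumerator L M i : ℝ) = 2 ^ (L + 1) + i - 1 := by
  rw [sortedNumerator, if_pos h, Nat.cast_sub (Nat.one_le_two_pow.trans (Nat.le_add_right _ _))]
  push_cast
  ring

theorem sortedNumerator_of_ge (h : 2 * M + 1 ≤ i) :
    (sortedNumerator L M i : ℝ) = 2 * (2 ^ L - M + i - 1) := by
  have := L.one_le_two_pow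
  unfold sortedNumerator
  split_ifs with h'
  · obtain rfl : i = 2 * M + 1 := by omega
    push_cast [Nat.cast_sub (Nat.one_le_two_pow.trans (Nat.le_add_right _ _))]
    ring
  · rw [Nat.cast_mul, Nat.sub_sub, Nat.cast_sub (by omega)]
    push_cast
    ring

theorem sortedNumerator_strictMonoOn : StrictMonoOn (sortedNumerator L M) (Ici 1) := by
  intro i hi j _ hij
  have : 2 ^ (L + 1) = 2 * 2 ^ L := by ring
  simp only [sortedNumerator, mem_Ici] at hi ⊢
  split_ifs <;> omega

theorem two_pow_le_sortedNumerator (hi : 1 ≤ i) : 2 ^ (L + 1) ≤ sortedNumerator L M i := by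
  have : 2 ^ (L + 1) = 2 * 2 ^ L := by ring
  unfold sortedNumerator
  split_ifs <;> omega

theorem sortedNumerator_lt_two_pow (hM : M < 2 ^ L) (hi : i ≤ 2 ^ L + M) :
    sortedNumerator L M i < 2 ^ (L + 2) := by
  have : 2 ^ (L + 2) = 4 * 2 ^ L := by ring
  have : 2 ^ (L + 1) = 2 * 2 ^ L := by ring
  unfold sortedNumerator
  split_ifs <;> omega

theorem exists_sortedNumerator_eq_two_pow_mul (hi : 1 ≤ i) (hiN : i ≤ 2 ^ L + M) :
    ∃ v m, m ≠ 0 ∧ m ≤ 2 * (2 ^ L + M) ∧ sortedNumerator L M i = 2 ^ v * m := by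
  have : 2 ^ (L + 1) = 2 * 2 ^ L := by ring
  have := L.one_le_two_pow
  unfold sortedNumerator
  split_ifs
  · exact ⟨0, _, by omega, by omega, (one_mul _).symm⟩
  · exact ⟨1, 2 ^ L + i - M - 1, by omega, by omega, by rw [pow_one]⟩

theorem sortedPoint_strictMonoOn : StrictMonoOn (sortedPoint L M) (Ici 1) := by
  intro i hi j hj hij
  have hpos : (0 : ℝ) < sortedNumerator L M i :=
    Nat.cast_pos.2 ((Nat.two_pow_pos _).trans_le (two_pow_le_sortedNumerator hi))
  have := logb_lt_logb one_lt_two hpos (Nat.cast_lt.2 (sortedNumerator_strictMonoOn hi hj hij))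
  unfold sortedPoint
  linarith

theorem sortedPoint_eq_fract (hM : M < 2 ^ L) (hi : 1 ≤ i) (hiN : i ≤ 2 ^ L + M) :
    sortedPoint L M i = Int.fract (logb 2 (sortedNumerator L M i)) := by
  rw [fract_logb_of_pow_le_of_lt_pow (k := L + 1) one_lt_two]
  · simp [sortedPoint]
  · exact_mod_cast two_pow_le_sortedNumerator hi
  · exact_mod_cast sortedNumerator_lt_two_pow hM hiN

theorem exists_xseq_eq_sortedPoint (hM : M < 2 ^ L) (hi : 1 ≤ i) (hiN : i ≤ 2 ^ L + M) :
    ∃ n, 1 ≤ n ∧ n ≤ 2 ^ L + M ∧ xseq n = sortedPoint L M i := by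
  obtain ⟨v, m, hm, hmN, hvm⟩ := exists_sortedNumerator_eq_two_pow_mul hi hiN
  obtain ⟨n, hn, hnm, hxn⟩ := exists_xseq_eq_fract_logb hm
  refine ⟨n, hn, by omega, ?_⟩
  rw [hxn, sortedPoint_eq_fract hM hi hiN, hvm, Nat.cast_mul, Nat.cast_pow, Nat.cast_two,
    fract_logb_pow_mul one_lt_two (Nat.cast_ne_zero.2 hm)]

theorem image_sortedPoint (hM : M < 2 ^ L) :
    (Finset.Icc 1 (2 ^ L + M)).image (sortedPoint L M) =
      (Finset.Icc 1 (2 ^ L + M)).image xseq := by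
  refine Finset.eq_of_subset_of_card_le (fun x hx => ?_) ?_
  · obtain ⟨i, hi, rfl⟩ := Finset.mem_image.1 hx
    obtain ⟨hi1, hiN⟩ := Finset.mem_Icc.1 hi
    obtain ⟨n, hn1, hnN, hxn⟩ := exists_xseq_eq_sortedPoint hM hi1 hiN
    exact Finset.mem_image.2 ⟨n, Finset.mem_Icc.2 ⟨hn1, hnN⟩, hxn⟩
  · rw [Finset.card_image_of_injOn (sortedPoint_strictMonoOn.mono fun j hj => ?_).injOn]
    · exact Finset.card_image_le
    · exact (Finset.mem_Icc.1 hj).1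

theorem sortedPoint_add_one_last (hM : M ≤ 2 ^ L) :
    sortedPoint L M (2 ^ L + M + 1) = sortedPoint L M 1 + 1 := by
  have logb_two_pow (k : ℕ) : logb 2 (2 ^ k) = k := by
    rw [logb_pow, logb_self_eq_one one_lt_two, mul_one]
  rw [sortedPoint, sortedPoint, sortedNumerator_of_ge (by omega), sortedNumerator_of_le (by omega)]
  push_cast
  rw [show (2 : ℝ) * (2 ^ L - M + (2 ^ L + M + 1) - 1) = 2 ^ (L + 2) by ring,
    add_sub_cancel_right, logb_two_pow, logb_two_pow]
  push_cast
  ring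

theorem sortedPoint_gap_of_le (h : i ≤ 2 * M) :
    sortedPoint L M (i + 1) - sortedPoint L M i =
      (log (2 ^ (L + 1) + i) - log (2 ^ (L + 1) + i - 1)) / log 2 := by
  rw [sortedPoint, sortedPoint, sortedNumerator_of_le (by omega), sortedNumerator_of_le (by omega)]
  push_cast
  rw [show (2 ^ (L + 1) + (i + 1) - 1 : ℝ) = 2 ^ (L + 1) + i by ring]
  simp only [logb]
  ring

theorem sortedPoint_gap_of_gt (h : 2 * M < i) :
    sortedPoint L M (i + 1) - sortedPoint L M i =
      (log (2 ^ L - M + i) - log (2 ^ L - M + i - 1)) / log 2 := by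
  have hpos : (0 : ℝ) < 2 ^ L - M + i - 1 := by
    have : (2 * M + 1 : ℝ) ≤ i := by exact_mod_cast h
    have : (1 : ℝ) ≤ 2 ^ L := one_le_pow₀ one_le_two
    linarith
  rw [sortedPoint, sortedPoint, sortedNumerator_of_ge (by omega), sortedNumerator_of_ge (by omega)]
  push_cast
  rw [show (2 ^ L - M + (i + 1) - 1 : ℝ) = 2 ^ L - M + i by ring,
    logb_mul two_ne_zero (by linarith), logb_mul two_ne_zero hpos.ne']
  simp only [logb]
  ring

end

theorem gap_structure_general (N : ℕ) (L : ℕ) (hL1 : 2 ^ L ≤ N) (hL2 : N < 2 ^ (L + 1))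
    (y : ℕ → ℝ)
    (hmono : ∀ i j, 1 ≤ i → i ≤ j → j ≤ N → y i ≤ y j)
    (himg : Finset.image y (Finset.Icc 1 N) = Finset.image xseq (Finset.Icc 1 N)) :
    ∀ i, 1 ≤ i → i ≤ N →
      (if i < N then y (i + 1) - y i else y 1 + 1 - y N) =
        (if i ≤ 2 * (N - 2 ^ L) then
          (Real.log (2 ^ (L + 1) + (i : ℝ)) - Real.log (2 ^ (L + 1) + (i : ℝ) - 1)) /
            Real.log 2
        else
          (Real.log ((N : ℝ) - 2 * ((N : ℝ) - 2 ^ L) + i) -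
            Real.log ((N : ℝ) - 2 * ((N : ℝ) - 2 ^ L) + i - 1)) / Real.log 2) := by
  intro i hi hiN
  obtain ⟨M, rfl⟩ := Nat.exists_eq_add_of_le hL1
  have hM : M < 2 ^ L := by rw [pow_succ] at hL2; linarith
  have hy : EqOn y (sortedPoint L M) (Finset.Icc 1 (2 ^ L + M)) :=
    Finset.eqOn_of_monotoneOn_of_strictMonoOn_of_image_eq
      (fun a ha b hb hab => hmono a b (Finset.mem_Icc.1 ha).1 hab (Finset.mem_Icc.1 hb).2)
      (sortedPoint_strictMonoOn.mono fun j hj => (Finset.mem_Icc.1 hj).1)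
      (himg.trans (image_sortedPoint hM).symm)
  have hyj {j : ℕ} (hj : 1 ≤ j) (hjN : j ≤ 2 ^ L + M) : y j = sortedPoint L M j :=
    hy (Finset.mem_Icc.2 ⟨hj, hjN⟩)
  have gap : (if i < 2 ^ L + M then y (i + 1) - y i else y 1 + 1 - y (2 ^ L + M)) =
      sortedPoint L M (i + 1) - sortedPoint L M i := by
    split_ifs with h
    · rw [hyj (by omega) h, hyj hi hiN]
    · obtain rfl : i = 2 ^ L + M := by omega
      rw [hyj le_rfl (by omega), hyj hi le_rfl, sortedPoint_add_one_last hM.le]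
  rw [gap, Nat.add_sub_cancel_left]
  split_ifs with h
  · exact sortedPoint_gap_of_le h
  · have hN : ((2 ^ L + M : ℕ) : ℝ) - 2 * ((2 ^ L + M : ℕ) - 2 ^ L) = 2 ^ L - M := by
      push_cast; ring
    rw [sortedPoint_gap_of_gt (by omega), hN]

theorem gap_structure (N : ℕ) (hN : 2 ≤ N) (L : ℕ) (hL1 : 2 ^ L ≤ N) (hL2 : N < 2 ^ (L + 1))
    (y : ℕ → ℝ)
    (hmono : ∀ i j, 1 ≤ i → i ≤ j → j ≤ N → y i ≤ y j)
    (himg : Finset.image y (Finset.Icc 1 N) = Finset.image xseq (Finset.Icc 1 N)) :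
    ∀ i, 1 ≤ i → i ≤ N →
      (if i < N then y (i + 1) - y i else y 1 + 1 - y N) =
        (if i ≤ 2 * (N - 2 ^ L) then
          (Real.log (2 ^ (L + 1) + (i : ℝ)) - Real.log (2 ^ (L + 1) + (i : ℝ) - 1)) /
            Real.log 2
        else
          (Real.log ((N : ℝ) - 2 * ((N : ℝ) - 2 ^ L) + i) -
            Real.log ((N : ℝ) - 2 * ((N : ℝ) - 2 ^ L) + i - 1)) / Real.log 2) :=
  gap_structure_general N L hL1 hL2 y hmono himg
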